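/- arXiv:1302.1262 — 3 statements merged into one kernel-verified Lean document; each statement's English description precedes it below -/
import Mathlib

section
/- The convolution generated by L has no annihilators: if f ∈ L_2(0,b) satisfies (g ∗ f)(x) = 0 for all g ∈ W^1_2[0,b], then f = 0 identically. -/
open MeasureTheory Filter Set intervalIntegral

noncomputable section

/-- Membership in the Sobolev space `W¹₂[0,b]`: differentiable with `f` and `f'` in `L₂(0,b)`. -/
def MemW12 (b : ℝ) (f : ℝ → ℂ) : Prop :=
  (∀ x : ℝ, DifferentiableAt ℝ f x) ∧
    MemLp f 2 (volume.restrict (Set.Ioc (0:ℝ) b)) ∧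
    MemLp (deriv f) 2 (volume.restrict (Set.Ioc (0:ℝ) b))

/-- Membership in `L₂(0,b)`. -/
def MemL2 (b : ℝ) (f : ℝ → ℂ) : Prop :=
  MemLp f 2 (volume.restrict (Set.Ioc (0:ℝ) b))

/-- The boundary form `U(y) = y(0) - ∫₀ᵇ (-i y'(x)) conj(σ(x)) dx`. -/
def Ubc (b : ℝ) (σ y : ℝ → ℂ) : ℂ :=
  y 0 - ∫ x in (0:ℝ)..b, (-Complex.I * deriv y x) * (starRingEnd ℂ) (σ x)

/-- The characteristic entire function `Δ(λ) = 1 - λ ∫₀ᵇ e^{iλx} conj(σ(x)) dx`. -/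
def Delta (b : ℝ) (σ : ℝ → ℂ) (l : ℂ) : ℂ :=
  1 - l * ∫ x in (0:ℝ)..b, Complex.exp (Complex.I * l * (x:ℂ)) * (starRingEnd ℂ) (σ x)

/-- The convolution generated by the operator `L`:
`(g ∗ f)(x) = i ∫₀ˣ g(x-ξ)f(ξ)dξ - ∫₀ᵇ conj(σ(μ)) ∂/∂μ (∫_μˣ g(x-ξ+μ)f(ξ)dξ) dμ`. -/
def conv (b : ℝ) (σ g f : ℝ → ℂ) (x : ℝ) : ℂ :=
  Complex.I * (∫ ξ in (0:ℝ)..x, g (x - ξ) * f ξ) -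
    ∫ μ in (0:ℝ)..b, (starRingEnd ℂ) (σ μ) *
      deriv (fun t : ℝ => ∫ ξ in t..x, g (x - ξ + t) * f ξ) μ

/-- `λₙ` is a zero of `Δ` of multiplicity exactly `m`. -/
def IsZeroOfOrder (b : ℝ) (σ : ℝ → ℂ) (lam : ℂ) (m : ℕ) : Prop :=
  (∀ j < m, iteratedDeriv j (Delta b σ) lam = 0) ∧ iteratedDeriv m (Delta b σ) lam ≠ 0

/-- `d j` are the Taylor coefficients at `λₙ` of `(λ-λₙ)^m / Δ(λ)`. -/
def IsTaylorCoeffs (b : ℝ) (σ : ℝ → ℂ) (lam : ℂ) (m : ℕ) (d : ℕ → ℂ) : Prop :=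
  ∃ F : ℂ → ℂ, AnalyticAt ℂ F lam ∧
    (∀ᶠ l in nhdsWithin lam {lam}ᶜ, F l = (l - lam) ^ m / Delta b σ l) ∧
    ∀ j, d j = iteratedDeriv j F lam / (Nat.factorial j : ℂ)

/-- The root functions `u_{s,n}(x) = Σ_{j=0}^s (d_j/j!) ((ix)^{s-j}/(s-j)!) e^{iλₙx}`. -/
def rootFun (lam : ℂ) (d : ℕ → ℂ) (s : ℕ) (x : ℝ) : ℂ :=
  ∑ j ∈ Finset.range (s + 1), d j / (Nat.factorial j : ℂ) *
    ((Complex.I * (x:ℂ)) ^ (s - j) / (Nat.factorial (s - j) : ℂ)) *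
      Complex.exp (Complex.I * lam * (x:ℂ))

/-- The coefficient functionals
`C_{k,n}(f) = -i U_μ{ ∫₀^μ f(ξ) ((i(μ-ξ))^k/k!) e^{iλₙ(μ-ξ)} dξ }`. -/
def coefF (b : ℝ) (σ : ℝ → ℂ) (lam : ℂ) (k : ℕ) (f : ℝ → ℂ) : ℂ :=
  -Complex.I * Ubc b σ (fun μ => ∫ ξ in (0:ℝ)..μ, f ξ *
    ((Complex.I * ((μ:ℂ) - (ξ:ℂ))) ^ k / (Nat.factorial k : ℂ)) *
      Complex.exp (Complex.I * lam * ((μ:ℂ) - (ξ:ℂ))))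

open scoped Topology

/-!
Testing against `g = 1`: the `σ`-term of `1 ∗ f` does not depend on `x`, so `1 ∗ f` is
`i ∫₀ˣ f` plus a constant. Comparing with the value at `x = 0` gives `∫₀ˣ f = 0` on `[0, b]`,
and the Lebesgue differentiation theorem then forces `f = 0` almost everywhere.
-/

section IntervalIntegral

variable {E : Type*} [NormedAddCommGroup E] [NormedSpace ℝ E]

theorem ae_restrict_Ioc_eq_zero_of_forall_intervalIntegral_eq_zero [CompleteSpace E]
    {f : ℝ → E} {a b : ℝ} (hf : IntervalIntegrable f volume a b) (h : ∀ x ∈ Icc a b, ∫ t in a..x, f t = 0) :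
    ∀ᵐ x ∂volume.restrict (Ioc a b), f x = 0 := by
  rw [ae_restrict_iff' measurableSet_Ioc]
  have hne_b : ∀ᵐ x : ℝ, x ≠ b := by simp [ae_iff, measure_singleton]
  filter_upwards [hf.ae_hasDerivAt_integral, hne_b] with x hderiv hxb hx
  have hab : a ≤ b := (hx.1.trans_le hx.2).le
  have hx_Icc : x ∈ uIcc a b := uIcc_of_le hab ▸ Ioc_subset_Icc_self hx
  have hzero : (fun y => ∫ t in a..y, f t) =ᶠ[𝓝 x] fun _ => 0 :=
    eventually_of_mem (Ioo_mem_nhds hx.1 (hx.2.lt_of_ne hxb)) fun y hy =>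
      h y (Ioo_subset_Icc_self hy)
  exact (hderiv hx_Icc a left_mem_uIcc).unique
    ((hasDerivAt_const x 0).congr_of_eventuallyEq hzero)

theorem deriv_intervalIntegral_lower_eq_neg {f : ℝ → E} {a b x μ : ℝ}
    (hf : IntervalIntegrable f volume a b) (hx : x ∈ Icc a b) (hμ : μ ∈ Ioo a b) :
    deriv (fun t => ∫ ξ in t..x, f ξ) μ = -deriv (fun t => ∫ ξ in a..t, f ξ) μ := by
  have hsub : ∀ c ∈ Icc a b, IntervalIntegrable f volume a c := fun c hc =>
    hf.mono_set (uIcc_subset_uIcc left_mem_uIcc (uIcc_of_le (hc.1.trans hc.2) ▸ hc))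
  have hev : (fun t => ∫ ξ in t..x, f ξ) =ᶠ[𝓝 μ]
      fun t => (∫ ξ in a..x, f ξ) - ∫ ξ in a..t, f ξ :=
    eventually_of_mem (Ioo_mem_nhds hμ.1 hμ.2) fun t ht =>
      (integral_interval_sub_left (hsub x hx) (hsub t (Ioo_subset_Icc_self ht))).symm
  rw [hev.deriv_eq, deriv_const_sub]

end IntervalIntegral

theorem conv_one_eq {b x : ℝ} (σ : ℝ → ℂ) {f : ℝ → ℂ} (hf : IntervalIntegrable f volume 0 b)
    (hx : x ∈ Icc 0 b) :
    conv b σ (fun _ => 1) f x = Complex.I * (∫ ξ in (0:ℝ)..x, f ξ) +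
      ∫ μ in (0:ℝ)..b, (starRingEnd ℂ) (σ μ) * deriv (fun t => ∫ ξ in (0:ℝ)..t, f ξ) μ := by
  have hne_b : ∀ᵐ μ : ℝ, μ ≠ b := by simp [ae_iff, measure_singleton]
  have hσ_term : (∫ μ in (0:ℝ)..b, (starRingEnd ℂ) (σ μ) *
        deriv (fun t => ∫ ξ in t..x, f ξ) μ) =
      -∫ μ in (0:ℝ)..b, (starRingEnd ℂ) (σ μ) * deriv (fun t => ∫ ξ in (0:ℝ)..t, f ξ) μ := by
    rw [← intervalIntegral.integral_neg]
    refine integral_congr_ae ?_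
    filter_upwards [hne_b] with μ hμb hμ
    rw [uIoc_of_le (hx.1.trans hx.2)] at hμ
    rw [deriv_intervalIntegral_lower_eq_neg hf hx ⟨hμ.1, hμ.2.lt_of_ne hμb⟩, mul_neg]
  simp only [conv, one_mul]
  rw [hσ_term, sub_neg_eq_add]

theorem memW12_const (b : ℝ) (c : ℂ) : MemW12 b fun _ => c :=
  ⟨fun _ => differentiableAt_const c, memLp_const c, by simp⟩

theorem statement8_general (b : ℝ) (hb : 0 < b) (σ : ℝ → ℂ)
    (f : ℝ → ℂ) (hf : MemL2 b f)
    (h0 : ∀ g : ℝ → ℂ, MemW12 b g → ∀ x ∈ Set.Icc (0:ℝ) b, conv b σ g f x = 0) :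
    ∀ᵐ x ∂(volume.restrict (Set.Ioc (0:ℝ) b)), f x = 0 := by
  have hfi : IntervalIntegrable f volume 0 b :=
    (intervalIntegrable_iff_integrableOn_Ioc_of_le hb.le).2 (hf.integrable one_le_two)
  refine ae_restrict_Ioc_eq_zero_of_forall_intervalIntegral_eq_zero hfi fun x hx => ?_
  have hconv_x := h0 _ (memW12_const b 1) x hx
  have hconv_0 := h0 _ (memW12_const b 1) 0 ⟨le_rfl, hb.le⟩
  rw [conv_one_eq σ hfi hx] at hconv_x
  rw [conv_one_eq σ hfi ⟨le_rfl, hb.le⟩, integral_same, mul_zero, zero_add] at hconv_0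
  rw [hconv_0, add_zero] at hconv_x
  exact (mul_eq_zero.1 hconv_x).resolve_left Complex.I_ne_zero

/-- the convolution has no annihilators: if `g ∗ f = 0` for all `g ∈ W¹₂[0,b]`,
then `f = 0` (as an element of `L₂(0,b)`). -/
theorem statement8 (b : ℝ) (hb : 0 < b) (σ : ℝ → ℂ) (hσ : MemL2 b σ)
    (f : ℝ → ℂ) (hf : MemL2 b f)
    (h0 : ∀ g : ℝ → ℂ, MemW12 b g → ∀ x ∈ Set.Icc (0:ℝ) b, conv b σ g f x = 0) :
    ∀ᵐ x ∂(volume.restrict (Set.Ioc (0:ℝ) b)), f x = 0 :=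
  statement8_general b hb σ f hf h0
end
end

section
/- For arbitrary λ ≠ β, the convolution of exponentials satisfies e^{iλx} ∗ e^{iβx} = (e^{iβx} Δ(λ) - e^{iλx} Δ(β)) / (β - λ). -/
open MeasureTheory Filter Set intervalIntegral

noncomputable section

open Complex ComplexConjugate

/-!
Both exponentials are explicit, so everything is computed in closed form. For `l ≠ β`,
`∫_t^x e^{il(x-ξ+t)} e^{iβξ} dξ = (e^{iβx} e^{ilt} - e^{ilx} e^{iβt}) / (i(β - l))`,
whose value at `t = 0` is the first term of the convolution and whose `t`-derivative is a
combination of `e^{ilt}` and `e^{iβt}`. Integrating that derivative against `conj σ` produces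
`l ∫₀ᵇ e^{ilμ} conj σ(μ) dμ = 1 - Δ(l)` and its analogue for `β`.
-/

lemma hasDerivAt_exp_const_mul_ofReal (c : ℂ) (μ : ℝ) :
    HasDerivAt (fun t : ℝ => exp (I * c * t)) (I * c * exp (I * c * μ)) μ := by
  simpa [mul_comm] using ((hasDerivAt_id (μ : ℂ)).const_mul (I * c)).cexp.comp_ofReal

lemma integral_exp_shift_mul_exp {l β : ℂ} (hlb : l ≠ β) (x t : ℝ) :
    ∫ ξ in t..x, exp (I * l * ((x - ξ + t : ℝ) : ℂ)) * exp (I * β * ξ) =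
      (exp (I * β * x) * exp (I * l * t) - exp (I * l * x) * exp (I * β * t)) /
        (I * (β - l)) := by
  have hc : I * (β - l) ≠ 0 := mul_ne_zero I_ne_zero (sub_ne_zero.2 hlb.symm)
  have factor : ∀ ξ : ℝ, exp (I * l * ((x - ξ + t : ℝ) : ℂ)) * exp (I * β * ξ) =
      exp (I * l * (x + t)) * exp (I * (β - l) * ξ) := fun ξ => by
    rw [← exp_add, ← exp_add]; push_cast; ring_nf
  simp_rw [factor]
  rw [intervalIntegral.integral_const_mul, integral_exp_mul_complex hc, ← mul_div_assoc, mul_sub,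
    ← exp_add, ← exp_add, ← exp_add, ← exp_add]
  ring_nf

lemma deriv_integral_exp_shift_mul_exp {l β : ℂ} (hlb : l ≠ β) (x μ : ℝ) :
    deriv (fun t : ℝ => ∫ ξ in t..x, exp (I * l * ((x - ξ + t : ℝ) : ℂ)) * exp (I * β * ξ)) μ =
      (exp (I * β * x) * (l * exp (I * l * μ)) - exp (I * l * x) * (β * exp (I * β * μ))) /
        (β - l) := by
  simp_rw [integral_exp_shift_mul_exp hlb x]
  have hasDeriv : HasDerivAt (fun t : ℝ =>
      (exp (I * β * x) * exp (I * l * t) - exp (I * l * x) * exp (I * β * t)) / (I * (β - l)))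
      ((exp (I * β * x) * (I * l * exp (I * l * μ)) -
        exp (I * l * x) * (I * β * exp (I * β * μ))) / (I * (β - l))) μ :=
    (((hasDerivAt_exp_const_mul_ofReal l μ).const_mul _).sub
      ((hasDerivAt_exp_const_mul_ofReal β μ).const_mul _)).div_const _
  rw [hasDeriv.deriv]
  field_simp

lemma MemL2.intervalIntegrable_conj {b : ℝ} {σ : ℝ → ℂ} (hσ : MemL2 b σ) (hb : 0 ≤ b) :
    IntervalIntegrable (fun μ => conj (σ μ)) volume 0 b := by
  have : IsFiniteMeasure (volume.restrict (Ioc (0 : ℝ) b)) :=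
    isFiniteMeasure_restrict.2 measure_Ioc_lt_top.ne
  rw [intervalIntegrable_iff_integrableOn_Ioc_of_le hb]
  exact (MemLp.star hσ).integrable one_le_two

lemma integral_conj_mul_exp_combination {b : ℝ} {σ : ℝ → ℂ}
    (hσ : IntervalIntegrable (fun μ => conj (σ μ)) volume 0 b) (A B D l β : ℂ) :
    ∫ μ in (0 : ℝ)..b, conj (σ μ) *
        ((A * (l * exp (I * l * μ)) - B * (β * exp (I * β * μ))) / D) =
      (A * (1 - Delta b σ l) - B * (1 - Delta b σ β)) / D := by
  have hint : ∀ c : ℂ, IntervalIntegrable (fun μ : ℝ => exp (I * c * μ) * conj (σ μ)) volume 0 b :=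
    fun c => hσ.continuousOn_mul (by fun_prop)
  rw [integral_congr (g := fun μ : ℝ => A * l / D * (exp (I * l * μ) * conj (σ μ)) -
      B * β / D * (exp (I * β * μ) * conj (σ μ))) fun μ _ => by ring,
    integral_sub ((hint l).const_mul _) ((hint β).const_mul _),
    intervalIntegral.integral_const_mul,
    intervalIntegral.integral_const_mul, Delta, Delta]
  ring

/-- for `λ ≠ β`,
`e^{iλx} ∗ e^{iβx} = (e^{iβx} Δ(λ) - e^{iλx} Δ(β)) / (β - λ)`. -/
theorem statement10 (b : ℝ) (hb : 0 < b) (σ : ℝ → ℂ) (hσ : MemL2 b σ)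
    (l β : ℂ) (hlb : l ≠ β) :
    ∀ x : ℝ, conv b σ (fun t : ℝ => Complex.exp (Complex.I * l * (t:ℂ)))
        (fun t : ℝ => Complex.exp (Complex.I * β * (t:ℂ))) x =
      (Complex.exp (Complex.I * β * (x:ℂ)) * Delta b σ l -
        Complex.exp (Complex.I * l * (x:ℂ)) * Delta b σ β) / (β - l) := by
  intro x
  have first_term := integral_exp_shift_mul_exp hlb x 0
  simp only [add_zero, ofReal_zero, mul_zero, exp_zero, mul_one] at first_term
  simp only [conv, first_term, deriv_integral_exp_shift_mul_exp hlb,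
    integral_conj_mul_exp_combination (hσ.intervalIntegrable_conj hb.le)]
  have hβl : β - l ≠ 0 := sub_ne_zero.2 hlb.symm
  field_simp
  ring
end
end

section
/- For the partial sum S_R(f;x) = -(1/2πi) ∮_{|λ|=R} (L-λI)^{-1} f dλ applied to f(x) = e^{iμx}, the remainder satisfies Q_R(e^{iμ·};x) := S_R(e^{iμ·};x) - e^{iμx} = (Δ(μ)/2πi) ∮_{|λ|=R} (e^{iλx}/Δ(λ)) · dλ/(μ - λ), valid for any μ with |μ| < R. -/
open MeasureTheory Filter Set intervalIntegral

noncomputable section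

/-!
For `λ ≠ μ` the convolution `e^{iλ·} ∗ e^{iμ·}` can be computed in closed form: the inner integral
is an explicit combination of `e^{iλt}` and `e^{iμt}`, and integrating its `t`-derivative against
`conj σ` produces `1 - Δ(λ)` and `1 - Δ(μ)`. Dividing by `Δ(λ)` gives
`(L - λI)⁻¹ e^{iμ·} = (e^{iμx} - Δ(μ) e^{iλx} / Δ(λ)) / (μ - λ)`. On the circle `|λ| = R` the first
term integrates to `-2πi e^{iμx}` by Cauchy's formula (since `|μ| < R`), which cancels `e^{iμx}`
in `S_R - e^{iμx}` and leaves the stated remainder.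
-/

open scoped ComplexConjugate

section

open Complex

lemma hasDerivAt_cexp_mul_ofReal (c : ℂ) (t : ℝ) :
    HasDerivAt (fun s : ℝ => cexp (c * s)) (c * cexp (c * t)) t := by
  simpa [mul_comm] using ((hasDerivAt_id (t : ℂ)).const_mul c).comp_ofReal.cexp

lemma IntervalIntegrable.conj {f : ℝ → ℂ} {a b : ℝ} (hf : IntervalIntegrable f volume a b) :
    IntervalIntegrable (fun x => conj (f x)) volume a b :=
  ⟨conjCLE.toContinuousLinearMap.integrable_comp hf.1,
    conjCLE.toContinuousLinearMap.integrable_comp hf.2⟩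

lemma intervalIntegrable_cexp_mul_conj {a b : ℝ} {σ : ℝ → ℂ}
    (hσ : IntervalIntegrable σ volume a b) (c : ℂ) :
    IntervalIntegrable (fun s : ℝ => cexp (c * s) * conj (σ s)) volume a b :=
  hσ.conj.continuousOn_mul (by fun_prop)

lemma continuous_Delta {b : ℝ} {σ : ℝ → ℂ} (hσ : IntervalIntegrable σ volume 0 b) :
    Continuous (Delta b σ) := by
  refine continuous_const.sub (continuous_id.mul (continuous_iff_continuousAt.2 fun l₀ => ?_))
  refine continuousAt_of_dominated_interval
    (bound := fun s => Real.exp ((‖l₀‖ + 1) * |b|) * ‖σ s‖)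
    (.of_forall fun l => (intervalIntegrable_cexp_mul_conj hσ (I * l)).def'.aestronglyMeasurable)
    ?_ (hσ.norm.const_mul _) (.of_forall fun s _ => by fun_prop)
  filter_upwards [Metric.ball_mem_nhds l₀ one_pos] with l hl
  refine .of_forall fun s hs => ?_
  have hl' : ‖l‖ ≤ ‖l₀‖ + 1 := by
    have := norm_le_norm_add_norm_sub' l l₀
    rw [Metric.mem_ball, dist_eq_norm] at hl
    linarith
  have hs' : |s| ≤ |b| := by simpa using abs_sub_left_of_mem_uIcc (Set.uIoc_subset_uIcc hs)
  calc ‖cexp (I * l * s) * conj (σ s)‖ ≤ Real.exp ‖I * l * s‖ * ‖σ s‖ := by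
        rw [norm_mul, RCLike.norm_conj]; gcongr; exact norm_exp_le_exp_norm _
    _ ≤ _ := by
        gcongr
        simp only [norm_mul, norm_I, one_mul, norm_real, Real.norm_eq_abs]
        gcongr

lemma integral_cexp_shift_mul_cexp {l μ : ℂ} (h : l ≠ μ) (x t : ℝ) :
    ∫ ξ in t..x, cexp (I * l * ↑(x - ξ + t)) * cexp (I * μ * ξ) =
      (cexp (I * μ * x) * cexp (I * l * t) - cexp (I * l * x) * cexp (I * μ * t)) /
        (I * (μ - l)) := by
  have hc : I * (μ - l) ≠ 0 := mul_ne_zero I_ne_zero (sub_ne_zero.2 h.symm)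
  have hsplit : ∀ ξ : ℝ, cexp (I * l * ↑(x - ξ + t)) * cexp (I * μ * ξ) =
      cexp (I * l * (x + t)) * cexp (I * (μ - l) * ξ) := fun ξ => by
    rw [← Complex.exp_add, ← Complex.exp_add]; push_cast; ring_nf
  simp only [hsplit, intervalIntegral.integral_const_mul, integral_exp_mul_complex hc]
  rw [mul_div_assoc', mul_sub, ← Complex.exp_add, ← Complex.exp_add, ← Complex.exp_add,
    ← Complex.exp_add]
  ring_nf

theorem conv_cexp_cexp {b : ℝ} {σ : ℝ → ℂ} (hσ : IntervalIntegrable σ volume 0 b) {l μ : ℂ}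
    (h : l ≠ μ) (x : ℝ) :
    conv b σ (fun t : ℝ => cexp (I * l * t)) (fun t : ℝ => cexp (I * μ * t)) x =
      (cexp (I * μ * x) * Delta b σ l - cexp (I * l * x) * Delta b σ μ) / (μ - l) := by
  have hc : μ - l ≠ 0 := sub_ne_zero.2 h.symm
  set A := cexp (I * μ * x)
  set B := cexp (I * l * x)
  have hderiv : ∀ s : ℝ, deriv (fun t : ℝ => ∫ ξ in t..x,
      cexp (I * l * ↑(x - ξ + t)) * cexp (I * μ * ξ)) s =
      (A * (I * l * cexp (I * l * s)) - B * (I * μ * cexp (I * μ * s))) / (I * (μ - l)) := by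
    intro s
    simp only [integral_cexp_shift_mul_cexp h x]
    exact ((((hasDerivAt_cexp_mul_ofReal _ s).const_mul A).sub
      ((hasDerivAt_cexp_mul_ofReal _ s).const_mul B)).div_const _).deriv
  have hfirst : ∫ ξ in (0:ℝ)..x, cexp (I * l * ↑(x - ξ)) * cexp (I * μ * ξ) =
      (A - B) / (I * (μ - l)) := by
    simpa using integral_cexp_shift_mul_cexp h x 0
  have hsecond : ∫ s in (0:ℝ)..b, conj (σ s) *
      ((A * (I * l * cexp (I * l * s)) - B * (I * μ * cexp (I * μ * s))) / (I * (μ - l))) =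
      (A * (1 - Delta b σ l) - B * (1 - Delta b σ μ)) / (μ - l) := by
    have hsplit : ∀ s : ℝ, conj (σ s) *
        ((A * (I * l * cexp (I * l * s)) - B * (I * μ * cexp (I * μ * s))) / (I * (μ - l))) =
        A * l / (μ - l) * (cexp (I * l * s) * conj (σ s)) -
          B * μ / (μ - l) * (cexp (I * μ * s) * conj (σ s)) := fun s => by
      field_simp
    simp only [hsplit]
    rw [intervalIntegral.integral_sub ((intervalIntegrable_cexp_mul_conj hσ _).const_mul _)
      ((intervalIntegrable_cexp_mul_conj hσ _).const_mul _), intervalIntegral.integral_const_mul,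
      intervalIntegral.integral_const_mul]
    simp only [Delta, sub_sub_cancel]
    ring
  simp only [conv, hderiv, hfirst, hsecond]
  field_simp
  ring

lemma conv_div_const_left (b : ℝ) (σ g f : ℝ → ℂ) (c : ℂ) (x : ℝ) :
    conv b σ (fun t => g t / c) f x = conv b σ g f x / c := by
  simp only [conv, div_mul_eq_mul_div, intervalIntegral.integral_div, deriv_div_const,
    mul_div_assoc', ← sub_div]

theorem conv_resolvent_cexp {b : ℝ} {σ : ℝ → ℂ} (hσ : IntervalIntegrable σ volume 0 b) {l μ : ℂ}
    (h : l ≠ μ) (hl : Delta b σ l ≠ 0) (x : ℝ) :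
    conv b σ (fun t : ℝ => cexp (I * l * t) / Delta b σ l) (fun t : ℝ => cexp (I * μ * t)) x =
      (cexp (I * μ * x) - Delta b σ μ * (cexp (I * l * x) / Delta b σ l)) / (μ - l) := by
  rw [conv_div_const_left, conv_cexp_cexp hσ h]
  field_simp

lemma circleIntegral_conv_resolvent_cexp {b : ℝ} {σ : ℝ → ℂ}
    (hσ : IntervalIntegrable σ volume 0 b) {R : ℝ} {μ : ℂ} (hμ : ‖μ‖ < R)
    (hΔ : ∀ l ∈ Metric.sphere (0 : ℂ) R, Delta b σ l ≠ 0) (x : ℝ) :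
    (∮ l in C(0, R), conv b σ (fun t : ℝ => cexp (I * l * t) / Delta b σ l)
        (fun t : ℝ => cexp (I * μ * t)) x) =
      -(2 * Real.pi * I * cexp (I * μ * x)) -
        Delta b σ μ * ∮ l in C(0, R), cexp (I * l * x) / Delta b σ l / (μ - l) := by
  have hμR : μ ∈ Metric.ball (0 : ℂ) R := mem_ball_zero_iff.2 hμ
  have hR : 0 ≤ R := (norm_nonneg μ).trans hμ.le
  have hne : ∀ l ∈ Metric.sphere (0 : ℂ) R, l ≠ μ := by
    rintro l hl rfl
    exact hμ.ne (mem_sphere_zero_iff_norm.1 hl)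
  have hconv : EqOn
      (fun l => conv b σ (fun t : ℝ => cexp (I * l * t) / Delta b σ l)
        (fun t : ℝ => cexp (I * μ * t)) x)
      (fun l => -cexp (I * μ * x) * (l - μ)⁻¹ -
        Delta b σ μ * (cexp (I * l * x) / Delta b σ l / (μ - l))) (Metric.sphere 0 R) :=
    fun l hl => by
      have hlμ : l - μ ≠ 0 := sub_ne_zero.2 (hne l hl)
      have hμl : μ - l ≠ 0 := sub_ne_zero.2 (hne l hl).symm
      simp only [conv_resolvent_cexp hσ (hne l hl) (hΔ l hl)]
      field_simp
      ring
  have hint₁ : CircleIntegrable (fun l => -cexp (I * μ * x) * (l - μ)⁻¹) 0 R :=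
    ContinuousOn.circleIntegrable hR <| continuousOn_const.mul <|
      (continuousOn_id.sub continuousOn_const).inv₀ fun l hl => sub_ne_zero.2 (hne l hl)
  have hint₂ : CircleIntegrable
      (fun l => Delta b σ μ * (cexp (I * l * x) / Delta b σ l / (μ - l))) 0 R :=
    ContinuousOn.circleIntegrable hR <| continuousOn_const.mul <|
      ((by fun_prop : ContinuousOn (fun l : ℂ => cexp (I * l * x)) _).div
        (continuous_Delta hσ).continuousOn hΔ).div
        (continuousOn_const.sub continuousOn_id) fun l hl => sub_ne_zero.2 (hne l hl).symm
  rw [circleIntegral.integral_congr hR hconv, circleIntegral.integral_sub hint₁ hint₂,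
    circleIntegral.integral_const_mul, circleIntegral.integral_const_mul,
    circleIntegral.integral_sub_inv_of_mem_ball hμR]
  ring

end

theorem statement17_general (b : ℝ) (hb : 0 < b) (σ : ℝ → ℂ) (hσ : MemL2 b σ)
    (R : ℝ) (hΔR : ∀ l : ℂ, ‖l‖ = R → Delta b σ l ≠ 0)
    (μ : ℂ) (hμ : ‖μ‖ < R)
    (S : ℝ → ℂ)
    (hS : S = fun x : ℝ => -(1 / (2 * Real.pi * Complex.I)) *
      ∮ l in C(0, R), conv b σ
        (fun t : ℝ => Complex.exp (Complex.I * l * (t:ℂ)) / Delta b σ l)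
        (fun t : ℝ => Complex.exp (Complex.I * μ * (t:ℂ))) x) :
    ∀ x : ℝ, S x - Complex.exp (Complex.I * μ * (x:ℂ)) =
      Delta b σ μ / (2 * Real.pi * Complex.I) *
        ∮ l in C(0, R), Complex.exp (Complex.I * l * (x:ℂ)) / Delta b σ l / (μ - l) := by
  intro x
  have hσ' : IntervalIntegrable σ volume 0 b :=
    (intervalIntegrable_iff_integrableOn_Ioc_of_le hb.le).2 (hσ.integrable one_le_two)
  have hΔ : ∀ l ∈ Metric.sphere (0 : ℂ) R, Delta b σ l ≠ 0 :=
    fun l hl => hΔR l (mem_sphere_zero_iff_norm.1 hl)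
  rw [hS]
  beta_reduce
  rw [circleIntegral_conv_resolvent_cexp hσ' hμ hΔ x]
  field_simp
  ring

/-- the Sedletskiy remainder formula for `f(x) = e^{iμx}`:
`S_R(e^{iμ·};x) - e^{iμx} = (Δ(μ)/2πi) ∮_{|λ|=R} (e^{iλx}/Δ(λ)) dλ/(μ-λ)`. -/
theorem statement17 (b : ℝ) (hb : 0 < b) (σ : ℝ → ℂ) (hσ : MemL2 b σ)
    (R : ℝ) (hR : 0 < R) (hΔR : ∀ l : ℂ, ‖l‖ = R → Delta b σ l ≠ 0)
    (μ : ℂ) (hμ : ‖μ‖ < R)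
    (S : ℝ → ℂ)
    (hS : S = fun x : ℝ => -(1 / (2 * Real.pi * Complex.I)) *
      ∮ l in C(0, R), conv b σ
        (fun t : ℝ => Complex.exp (Complex.I * l * (t:ℂ)) / Delta b σ l)
        (fun t : ℝ => Complex.exp (Complex.I * μ * (t:ℂ))) x) :
    ∀ x : ℝ, S x - Complex.exp (Complex.I * μ * (x:ℂ)) =
      Delta b σ μ / (2 * Real.pi * Complex.I) *
        ∮ l in C(0, R), Complex.exp (Complex.I * l * (x:ℂ)) / Delta b σ l / (μ - l) :=
  statement17_general b hb σ hσ R hΔR μ hμ S hS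
end
end
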